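/- arXiv:2409.18519 — 6 statements merged into one kernel-verified Lean document; each statement's English description precedes it below -/
import Mathlib

section
/- Let c : ℝ → ℝ be integrable on ℝ with |c(t)| ≤ C·(1+|t|)^{-2} for all t, and define s(u) = 1 + ∫ e^{-itu} c(t) dt (so s is real-valued by the symmetry assumption c(t)=c(-t)). If ∫ c(t) dt = -1, then there is a constant C' such that |s(u)| ≤ C'·|u| for all u ∈ ℝ. Consequently, for every ε > 0, ∫_{|u|<ε} s(u)^{-1} du = ∞ whenever s ≥ 0. -/
open MeasureTheory Real Filter Topology

lemma cos_sub_one_bound (x : ℝ) : |Real.cos x - 1| ≤ 3 * x ^ 2 * (1 + x ^ 2)⁻¹ := by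
  have h1 := Real.cos_le_one x
  have h2 := Real.neg_one_le_cos x
  have h3 : 1 - x ^ 2 / 2 ≤ Real.cos x := Real.one_sub_sq_div_two_le_cos
  have hx : (0:ℝ) < 1 + x ^ 2 := by positivity
  rw [abs_sub_comm, abs_of_nonneg (by linarith)]
  have key : (1 - Real.cos x) * (1 + x ^ 2) ≤ 3 * x ^ 2 := by
    rcases le_or_gt (x ^ 2) 2 with h | h
    · nlinarith [sq_nonneg x]
    · nlinarith [sq_nonneg x]
  calc 1 - Real.cos x = (1 - Real.cos x) * (1 + x ^ 2) * (1 + x ^ 2)⁻¹ := by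
        field_simp
    _ ≤ 3 * x ^ 2 * (1 + x ^ 2)⁻¹ := by
        exact mul_le_mul_of_nonneg_right key (inv_nonneg.2 hx.le)

/-- If `c` is an even integrable function with `|c t| ≤ C (1+|t|)⁻²`,
`s u = 1 + ∫ e^{-itu} c(t) dt` (real-valued by evenness, written with cosine) and
`∫ c = -1`, then `|s u| ≤ C' |u|` and consequently `∫_{|u|<ε} s⁻¹ = ∞` whenever `s ≥ 0`
(with the convention `1/0 = ∞`). -/
theorem stmt0 (c : ℝ → ℝ) (C : ℝ)
    (hint : Integrable c)
    (heven : ∀ t, c (-t) = c t)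
    (hbd : ∀ t, |c t| ≤ C * ((1 + |t|) ^ 2)⁻¹)
    (hmass : (∫ t, c t) = -1)
    (s : ℝ → ℝ)
    (hs : ∀ u, s u = 1 + ∫ t, Real.cos (t * u) * c t) :
    (∃ C' : ℝ, ∀ u, |s u| ≤ C' * |u|) ∧
    ((∀ u, 0 ≤ s u) → ∀ ε > 0,
      ∫⁻ u in Set.Ioo (-ε) ε, (ENNReal.ofReal (s u))⁻¹ = ⊤) := by
  have hC : 0 ≤ C := le_trans (abs_nonneg _) (by simpa using hbd 0)
  have key : ∀ u, |s u| ≤ (3 * C * π) * |u| := by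
    intro u
    rcases eq_or_ne u 0 with rfl | hu
    · have h0 : s 0 = 0 := by rw [hs 0]; simp [hmass]
      simp [h0]
    · have hcont : Integrable (fun t => Real.cos (t * u) * c t) := by
        refine Integrable.bdd_mul hint ?_ (c := 1) (Filter.Eventually.of_forall fun t => by
          simpa [Real.norm_eq_abs] using Real.abs_cos_le_one (t * u))
        exact (Real.continuous_cos.comp (continuous_id.mul continuous_const)).aestronglyMeasurable
      have hrw : s u = ∫ t, (Real.cos (t * u) - 1) * c t := by
        rw [hs u]
        have : (fun t => (Real.cos (t * u) - 1) * c t)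
            = fun t => Real.cos (t * u) * c t - c t := by funext t; ring
        rw [this, integral_sub hcont hint, hmass]
        ring
      have hg_int : Integrable (fun t : ℝ => 3 * C * u ^ 2 * (1 + (t * u) ^ 2)⁻¹) := by
        have := (integrable_inv_one_add_sq.comp_mul_right' hu).const_mul (3 * C * u ^ 2)
        simpa using this
      have hpt : ∀ t, ‖(Real.cos (t * u) - 1) * c t‖ ≤ 3 * C * u ^ 2 * (1 + (t * u) ^ 2)⁻¹ := by
        intro t
        rw [Real.norm_eq_abs, abs_mul]
        have h1 := cos_sub_one_bound (t * u)
        have h2 := hbd t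
        have hB : t ^ 2 * ((1 + |t|) ^ 2)⁻¹ ≤ 1 := by
          rw [mul_inv_le_iff₀ (by positivity)]
          nlinarith [abs_nonneg t, sq_abs t]
        calc |Real.cos (t * u) - 1| * |c t|
            ≤ (3 * (t * u) ^ 2 * (1 + (t * u) ^ 2)⁻¹) * (C * ((1 + |t|) ^ 2)⁻¹) :=
              mul_le_mul h1 h2 (abs_nonneg _) (by positivity)
          _ = (3 * C * u ^ 2 * (1 + (t * u) ^ 2)⁻¹) * (t ^ 2 * ((1 + |t|) ^ 2)⁻¹) := by
              ring
          _ ≤ (3 * C * u ^ 2 * (1 + (t * u) ^ 2)⁻¹) * 1 :=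
              mul_le_mul_of_nonneg_left hB (by positivity)
          _ = 3 * C * u ^ 2 * (1 + (t * u) ^ 2)⁻¹ := by ring
      have hle := norm_integral_le_of_norm_le hg_int (Filter.Eventually.of_forall hpt)
      rw [← hrw] at hle
      have hval : (∫ t : ℝ, 3 * C * u ^ 2 * (1 + (t * u) ^ 2)⁻¹) = 3 * C * π * |u| := by
        rw [MeasureTheory.integral_const_mul]
        rw [MeasureTheory.Measure.integral_comp_mul_right (fun x => (1 + x ^ 2)⁻¹) u]
        rw [integral_univ_inv_one_add_sq, smul_eq_mul, abs_inv]
        rw [show u ^ 2 = |u| ^ 2 from (sq_abs u).symm]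
        have : |u| ≠ 0 := abs_ne_zero.2 hu
        field_simp
      rw [Real.norm_eq_abs, hval] at hle
      exact hle
  refine ⟨⟨3 * C * π, key⟩, ?_⟩
  intro hpos ε hε
  set E : ℝ := 3 * C * π + 1 with hEdef
  have hE0 : 0 < E := by positivity
  have hsle : ∀ u, s u ≤ E * |u| := by
    intro u
    have := key u
    have h1 : s u ≤ |s u| := le_abs_self _
    nlinarith [abs_nonneg u]
  -- reduce to the model integral
  have mono1 : ∫⁻ u in Set.Ioo (-ε) ε, (ENNReal.ofReal (E * |u|))⁻¹
      ≤ ∫⁻ u in Set.Ioo (-ε) ε, (ENNReal.ofReal (s u))⁻¹ := by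
    refine lintegral_mono fun u => ?_
    exact ENNReal.inv_le_inv' (ENNReal.ofReal_le_ofReal (hsle u))
  have mono2 : ∫⁻ u in Set.Ioo (0:ℝ) ε, (ENNReal.ofReal (E * |u|))⁻¹
      ≤ ∫⁻ u in Set.Ioo (-ε) ε, (ENNReal.ofReal (E * |u|))⁻¹ := by
    refine lintegral_mono_set fun x hx => ?_
    exact ⟨by linarith [hx.1], hx.2⟩
  have hmodel : ∫⁻ u in Set.Ioo (0:ℝ) ε, (ENNReal.ofReal (E * |u|))⁻¹ = ⊤ := by
    by_contra h
    -- rewrite the integrand as ofReal of a nonneg function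
    have hcongr : ∫⁻ u in Set.Ioo (0:ℝ) ε, (ENNReal.ofReal (E * |u|))⁻¹
        = ∫⁻ u in Set.Ioo (0:ℝ) ε, ENNReal.ofReal ((E * |u|)⁻¹) := by
      refine setLIntegral_congr_fun measurableSet_Ioo ?_
      intro u hu
      exact (ENNReal.ofReal_inv_of_pos (mul_pos hE0 (abs_pos.2 (ne_of_gt hu.1)))).symm
    rw [hcongr] at h
    have hmeas : AEStronglyMeasurable (fun u : ℝ => (E * |u|)⁻¹)
        (volume.restrict (Set.Ioo (0:ℝ) ε)) :=
      ((measurable_const.mul (measurable_abs)).inv).aestronglyMeasurable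
    have hnn : 0 ≤ᵐ[volume.restrict (Set.Ioo (0:ℝ) ε)] fun u : ℝ => (E * |u|)⁻¹ :=
      Filter.Eventually.of_forall fun u => by positivity
    have hI : IntegrableOn (fun u : ℝ => (E * |u|)⁻¹) (Set.Ioo (0:ℝ) ε) :=
      (lintegral_ofReal_ne_top_iff_integrable hmeas hnn).1 h
    have hI2 : IntegrableOn (fun u : ℝ => u ^ (-1 : ℝ)) (Set.Ioo (0:ℝ) ε) := by
      have h2 : IntegrableOn (fun u : ℝ => E * (E * |u|)⁻¹) (Set.Ioo (0:ℝ) ε) :=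
        hI.const_mul E
      refine (h2.congr_fun ?_ measurableSet_Ioo)
      intro u hu
      have hu0 : 0 < u := hu.1
      show E * (E * |u|)⁻¹ = u ^ (-1 : ℝ)
      rw [Real.rpow_neg_one]
      field_simp [abs_of_pos hu0]
      exact (abs_of_pos hu0).symm
    have := (intervalIntegral.integrableOn_Ioo_rpow_iff hε).1 hI2
    linarith
  refine eq_top_iff.2 ?_
  calc (⊤ : ENNReal) = ∫⁻ u in Set.Ioo (0:ℝ) ε, (ENNReal.ofReal (E * |u|))⁻¹ := hmodel.symm
    _ ≤ ∫⁻ u in Set.Ioo (-ε) ε, (ENNReal.ofReal (E * |u|))⁻¹ := mono2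
    _ ≤ ∫⁻ u in Set.Ioo (-ε) ε, (ENNReal.ofReal (s u))⁻¹ := mono1
end

section
/- Let c : ℝ² → ℝ be even and measurable with |c(t)| ≤ C·(1+‖t‖)^{-4-ε} for some C, ε > 0, and suppose ∫ c = -1. Define s(u) = 1 + ∫ e^{-i⟨t,u⟩} c(t) dt. Then s is twice continuously differentiable, s(0) = 0, ∇s(0) = 0, and hence there is a constant c₀ with s(u) ≤ c₀·‖u‖² for all u in a neighborhood of 0. Consequently ∫_{‖u‖<ε} s(u)^{-1} du = ∞ whenever s ≥ 0. -/
open MeasureTheory Real Filter Topology Metric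
open scoped RealInnerProductSpace

/-- In dimension 2, if `c` is even measurable with
`|c t| ≤ C (1+‖t‖)^{-4-ε₀}` and `∫ c = -1`, then the structure factor
`s u = 1 + ∫ e^{-i⟨t,u⟩} c(t) dt` is C², vanishes at 0 together with its gradient,
is `≤ c₀ ‖u‖²` near 0, and consequently `∫_{‖u‖<ε} s⁻¹ = ∞` whenever `s ≥ 0`. -/
theorem stmt1 (c : EuclideanSpace ℝ (Fin 2) → ℝ) (C ε₀ : ℝ) (hC : 0 < C) (hε₀ : 0 < ε₀)
    (hmeas : Measurable c)
    (heven : ∀ t, c (-t) = c t)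
    (hbd : ∀ t, |c t| ≤ C * ((1 + ‖t‖) ^ (4 + ε₀))⁻¹)
    (hmass : (∫ t, c t) = -1)
    (s : EuclideanSpace ℝ (Fin 2) → ℝ)
    (hs : ∀ u, s u = 1 + ∫ t, Real.cos ⟪t, u⟫ * c t) :
    ContDiff ℝ 2 s ∧ s 0 = 0 ∧ fderiv ℝ s 0 = 0 ∧
    (∃ c₀ : ℝ, ∃ δ > 0, ∀ u, ‖u‖ < δ → s u ≤ c₀ * ‖u‖ ^ 2) ∧
    ((∀ u, 0 ≤ s u) → ∀ ε > 0,
      ∫⁻ u in ball (0 : EuclideanSpace ℝ (Fin 2)) ε, (ENNReal.ofReal (s u))⁻¹ = ⊤) := by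
  set f : (EuclideanSpace ℝ (Fin 2)) → ℂ := fun t => (c t : ℂ) with hf
  -- integrability with polynomial weights
  have hI : ∀ (n : ℕ), (n : ℕ∞) ≤ 2 → Integrable (fun v : (EuclideanSpace ℝ (Fin 2)) => ‖v‖ ^ n * ‖f v‖) := by
    intro n hn
    have hn2 : n ≤ 2 := by exact_mod_cast hn
    have hint : Integrable (fun x : (EuclideanSpace ℝ (Fin 2)) => C * (1 + ‖x‖) ^ (-(2 + ε₀))) :=
      (integrable_one_add_norm (by simp [finrank_euclideanSpace_fin]; linarith)).const_mul C
    refine hint.mono' ?_ (ae_of_all _ fun t => ?_)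
    · apply Measurable.aestronglyMeasurable
      fun_prop
    · have h1 : (0:ℝ) < 1 + ‖t‖ := by positivity
      have hb := hbd t
      rw [norm_mul, norm_pow, norm_norm, hf]
      simp only [Complex.norm_real, norm_norm]
      calc ‖t‖ ^ n * ‖c t‖ ≤ (1 + ‖t‖) ^ n * (C * ((1 + ‖t‖) ^ (4 + ε₀))⁻¹) := by
            apply mul_le_mul _ hb (abs_nonneg _) (by positivity)
            exact pow_le_pow_left₀ (norm_nonneg t) (by linarith) n
        _ = C * ((1 + ‖t‖) ^ (n:ℝ) * ((1 + ‖t‖) ^ (4 + ε₀))⁻¹) := by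
            rw [← Real.rpow_natCast (1 + ‖t‖) n]; ring
        _ = C * (1 + ‖t‖) ^ ((n:ℝ) - (4 + ε₀)) := by
            rw [← Real.rpow_neg h1.le, ← Real.rpow_add h1]; ring_nf
        _ ≤ C * (1 + ‖t‖) ^ (-(2 + ε₀)) := by
            apply mul_le_mul_of_nonneg_left _ hC.le
            apply Real.rpow_le_rpow_of_exponent_le (by linarith [norm_nonneg t])
            have : (n:ℝ) ≤ 2 := by exact_mod_cast hn2
            linarith
  have hfm : AEStronglyMeasurable f :=
    (Complex.measurable_ofReal.comp hmeas).aestronglyMeasurable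
  have hfi : Integrable f := by
    rw [← integrable_norm_iff hfm]
    simpa using hI 0 (by norm_num)
  -- Fourier representation
  have hrep : ∀ u : (EuclideanSpace ℝ (Fin 2)), s u = 1 + (FourierTransform.fourier f ((2 * π)⁻¹ • u)).re := by
    intro u
    rw [hs u]
    congr 1
    rw [Real.fourier_eq]
    have h := (ContinuousLinearMap.integral_comp_comm Complex.reCLM
      ((Real.fourierIntegral_convergent_iff ((2 * π)⁻¹ • u)).mpr hfi)).symm
    simp only [Complex.reCLM_apply] at h
    rw [h]
    congr 1
    ext t
    have hπ : (2 * π) ≠ 0 := by positivity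
    have h2 : ⟪t, (2 * π)⁻¹ • u⟫ = (2 * π)⁻¹ * ⟪t, u⟫ := real_inner_smul_right _ _ _
    rw [Circle.smul_def, Real.fourierChar_apply, h2]
    have h3 : (2 * π * -((2 * π)⁻¹ * ⟪t, u⟫) : ℝ) = -⟪t, u⟫ := by field_simp
    rw [h3, Complex.exp_mul_I, smul_eq_mul]
    simp only [Complex.add_re, Complex.mul_re, Complex.cos_ofReal_re, Complex.cos_ofReal_im,
      Complex.sin_ofReal_re, Complex.sin_ofReal_im, Complex.I_re, Complex.I_im,
      Complex.ofReal_re, Complex.ofReal_im, Real.cos_neg]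
    simp only [hf, Complex.ofReal_re, Complex.ofReal_im, Complex.add_im, Complex.mul_im,
      Complex.cos_ofReal_im, Complex.sin_ofReal_im, Complex.cos_ofReal_re, Complex.sin_ofReal_re,
      Complex.I_re, Complex.I_im]
    ring
  -- C²
  have hcds : ContDiff ℝ 2 s := by
    have hF : ContDiff ℝ 2 (FourierTransform.fourier f) := Real.contDiff_fourier (N := 2) hI
    have : s = fun u => 1 + Complex.reCLM (FourierTransform.fourier f ((2 * π)⁻¹ • u)) := by
      funext u; exact hrep u
    rw [this]
    exact contDiff_const.add (Complex.reCLM.contDiff.comp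
      (hF.comp (contDiff_id.const_smul ((2 * π)⁻¹))))
  -- s 0 = 0
  have hs0 : s 0 = 0 := by
    rw [hs 0]
    have : (fun t : (EuclideanSpace ℝ (Fin 2)) => Real.cos ⟪t, (0:(EuclideanSpace ℝ (Fin 2)))⟫ * c t) = c := by
      funext t; simp [inner_zero_right]
    rw [this, hmass]; ring
  -- evenness of s
  have hseven : ∀ u : (EuclideanSpace ℝ (Fin 2)), s (-u) = s u := by
    intro u
    rw [hs, hs]
    congr 2
    funext t
    rw [inner_neg_right, Real.cos_neg]
  -- fderiv at 0 vanishes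
  have hd : DifferentiableAt ℝ s 0 := (hcds.differentiable two_ne_zero).differentiableAt
  have hfd : fderiv ℝ s 0 = 0 := by
    have h1 : HasFDerivAt (fun u : (EuclideanSpace ℝ (Fin 2)) => -u) (-(ContinuousLinearMap.id ℝ (EuclideanSpace ℝ (Fin 2)))) 0 :=
      (hasFDerivAt_id (0:(EuclideanSpace ℝ (Fin 2)))).neg
    have h2 : HasFDerivAt s (fderiv ℝ s 0) (-(0:(EuclideanSpace ℝ (Fin 2)))) := by
      simpa using hd.hasFDerivAt
    have h3 : HasFDerivAt (fun u : (EuclideanSpace ℝ (Fin 2)) => s (-u))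
        ((fderiv ℝ s 0).comp (-(ContinuousLinearMap.id ℝ (EuclideanSpace ℝ (Fin 2))))) 0 := h2.comp 0 h1
    have h4 : (fun u : (EuclideanSpace ℝ (Fin 2)) => s (-u)) = s := funext hseven
    rw [h4] at h3
    have h5 := h3.fderiv
    ext v
    have h6 := congrArg (fun L : (EuclideanSpace ℝ (Fin 2)) →L[ℝ] ℝ => L v) h5
    simp only [ContinuousLinearMap.comp_apply, ContinuousLinearMap.neg_apply,
      ContinuousLinearMap.id_apply, map_neg] at h6
    simp only [ContinuousLinearMap.zero_apply]
    linarith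
  -- quadratic bound
  have hcd1 : ContDiff ℝ 1 (fderiv ℝ s) := hcds.fderiv_right (by norm_num)
  obtain ⟨M, hM⟩ := (isCompact_closedBall (0:(EuclideanSpace ℝ (Fin 2))) 1).exists_bound_of_continuousOn
    (hcd1.continuous_fderiv one_ne_zero).continuousOn
  have hM0 : 0 ≤ M := le_trans (norm_nonneg _) (hM 0 (mem_closedBall_self zero_le_one))
  have hM' : ∀ x ∈ closedBall (0:(EuclideanSpace ℝ (Fin 2))) 1, ‖fderiv ℝ s x‖ ≤ M * ‖x‖ := by
    intro x hx
    have := Convex.norm_image_sub_le_of_norm_fderiv_le (f := fderiv ℝ s)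
      (fun y _ => (hcd1.differentiable one_ne_zero).differentiableAt)
      (fun y hy => hM y hy) (convex_closedBall (0:(EuclideanSpace ℝ (Fin 2))) 1)
      (mem_closedBall_self zero_le_one) hx
    simpa [hfd] using this
  have key : ∀ u : (EuclideanSpace ℝ (Fin 2)), ‖u‖ < 1 → s u ≤ M * ‖u‖ ^ 2 := by
    intro u hu
    have h0 : (0:(EuclideanSpace ℝ (Fin 2))) ∈ closedBall (0:(EuclideanSpace ℝ (Fin 2))) ‖u‖ := mem_closedBall_self (norm_nonneg u)
    have hu1 : u ∈ closedBall (0:(EuclideanSpace ℝ (Fin 2))) ‖u‖ := by simp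
    have hbound := Convex.norm_image_sub_le_of_norm_fderiv_le (f := s)
      (fun y _ => (hcds.differentiable two_ne_zero).differentiableAt)
      (fun y hy => by
        have hy1 : y ∈ closedBall (0:(EuclideanSpace ℝ (Fin 2))) 1 :=
          closedBall_subset_closedBall hu.le hy
        calc ‖fderiv ℝ s y‖ ≤ M * ‖y‖ := hM' y hy1
          _ ≤ M * ‖u‖ := mul_le_mul_of_nonneg_left (mem_closedBall_zero_iff.mp hy) hM0)
      (convex_closedBall (0:(EuclideanSpace ℝ (Fin 2))) ‖u‖) h0 hu1
    rw [hs0, sub_zero, sub_zero, Real.norm_eq_abs] at hbound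
    have := abs_le.mp hbound
    nlinarith [this.2]
  refine ⟨hcds, hs0, hfd, ⟨M, 1, one_pos, key⟩, ?_⟩
  -- divergence
  intro hpos ε hε
  set c₁ : ℝ := M + 1 with hc₁
  have hc₁0 : 0 < c₁ := by linarith
  have key' : ∀ u : (EuclideanSpace ℝ (Fin 2)), ‖u‖ < 1 → s u ≤ c₁ * ‖u‖ ^ 2 := by
    intro u hu
    have := key u hu
    nlinarith [sq_nonneg ‖u‖]
  set r : ℝ := min ε 1 with hr
  have hr0 : 0 < r := lt_min hε one_pos
  have hr1 : r ≤ 1 := min_le_right _ _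
  have hrε : r ≤ ε := min_le_left _ _
  set B := volume (ball (0:(EuclideanSpace ℝ (Fin 2))) 1) with hB
  have hB0 : B ≠ 0 := (measure_ball_pos volume (0:(EuclideanSpace ℝ (Fin 2))) one_pos).ne'
  have hBtop : B ≠ ⊤ := measure_ball_lt_top.ne
  set A : ℕ → Set (EuclideanSpace ℝ (Fin 2)) := fun k => ball (0:(EuclideanSpace ℝ (Fin 2))) (r / 2 ^ k) \ ball (0:(EuclideanSpace ℝ (Fin 2))) (r / 2 ^ (k+1)) with hA
  have hAm : ∀ k, MeasurableSet (A k) := fun k => measurableSet_ball.diff measurableSet_ball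
  have hAsub : ∀ k, A k ⊆ ball (0:(EuclideanSpace ℝ (Fin 2))) r := by
    intro k x hx
    refine ball_subset_ball ?_ hx.1
    apply div_le_self hr0.le
    exact one_le_pow₀ one_le_two
  have hAdisj : Pairwise (Function.onFun Disjoint A) := by
    have hlt : ∀ i j : ℕ, i < j → Disjoint (A i) (A j) := by
      intro i j hij
      rw [Set.disjoint_left]
      intro x hxi hxj
      apply hxi.2
      refine ball_subset_ball ?_ hxj.1
      apply div_le_div_of_nonneg_left hr0.le (by positivity)
      exact pow_le_pow_right₀ one_le_two hij
    intro i j hij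
    rcases hij.lt_or_gt with h | h
    · exact hlt i j h
    · exact (hlt j i h).symm
  -- the measure of each annulus
  have hmeasA : ∀ k, volume (A k) =
      ENNReal.ofReal (3 / 4 * (r / 2 ^ k) ^ 2) * B := by
    intro k
    have hsub : ball (0:(EuclideanSpace ℝ (Fin 2))) (r / 2 ^ (k+1)) ⊆ ball (0:(EuclideanSpace ℝ (Fin 2))) (r / 2 ^ k) := by
      apply ball_subset_ball
      apply div_le_div_of_nonneg_left hr0.le (by positivity)
      exact pow_le_pow_right₀ one_le_two (Nat.le_succ k)
    rw [hA]
    rw [measure_diff hsub measurableSet_ball.nullMeasurableSet measure_ball_lt_top.ne]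
    rw [Measure.addHaar_ball (r := r / 2 ^ (k+1)) volume (0:(EuclideanSpace ℝ (Fin 2))) (by positivity),
        Measure.addHaar_ball (r := r / 2 ^ k) volume (0:(EuclideanSpace ℝ (Fin 2))) (by positivity)]
    rw [finrank_euclideanSpace_fin, ← hB]
    rw [← ENNReal.sub_mul (fun _ _ => hBtop)]
    congr 1
    rw [← ENNReal.ofReal_sub _ (by positivity)]
    congr 1
    rw [pow_succ]
    ring
  -- lower bound on each annulus
  have hsmeas : Measurable fun u : (EuclideanSpace ℝ (Fin 2)) => (ENNReal.ofReal (s u))⁻¹ :=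
    (ENNReal.measurable_ofReal.comp hcds.continuous.measurable).inv
  have hann : ∀ k : ℕ, ENNReal.ofReal (3 / (4 * c₁)) * B ≤
      ∫⁻ u in A k, (ENNReal.ofReal (s u))⁻¹ := by
    intro k
    have ha : (0:ℝ) < (r / 2 ^ k) ^ 2 := by positivity
    calc ENNReal.ofReal (3 / (4 * c₁)) * B
        = (ENNReal.ofReal (c₁ * (r / 2 ^ k) ^ 2))⁻¹ * volume (A k) := by
          rw [hmeasA k, ← ENNReal.ofReal_inv_of_pos (by positivity), ← mul_assoc,
            ← ENNReal.ofReal_mul (by positivity)]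
          congr 2
          field_simp
      _ = ∫⁻ _ in A k, (ENNReal.ofReal (c₁ * (r / 2 ^ k) ^ 2))⁻¹ := by
          rw [setLIntegral_const]
      _ ≤ ∫⁻ u in A k, (ENNReal.ofReal (s u))⁻¹ := by
          apply setLIntegral_mono hsmeas
          intro u hu
          apply ENNReal.inv_le_inv.mpr
          apply ENNReal.ofReal_le_ofReal
          have hu1 : ‖u‖ < r / 2 ^ k := mem_ball_zero_iff.mp hu.1
          have hur : ‖u‖ < 1 := lt_of_lt_of_le hu1 (le_trans (div_le_self hr0.le
            (one_le_pow₀ one_le_two)) hr1)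
          calc s u ≤ c₁ * ‖u‖ ^ 2 := key' u hur
            _ ≤ c₁ * (r / 2 ^ k) ^ 2 := by
                apply mul_le_mul_of_nonneg_left _ hc₁0.le
                exact pow_le_pow_left₀ (norm_nonneg u) hu1.le 2
  -- conclusion
  have hKne : ENNReal.ofReal (3 / (4 * c₁)) * B ≠ 0 := by
    apply mul_ne_zero _ hB0
    simp only [ne_eq, ENNReal.ofReal_eq_zero, not_le]
    positivity
  rw [← top_le_iff]
  calc (⊤ : ENNReal) = ∑' _ : ℕ, ENNReal.ofReal (3 / (4 * c₁)) * B :=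
        (ENNReal.tsum_const_eq_top_of_ne_zero hKne).symm
    _ ≤ ∑' k : ℕ, ∫⁻ u in A k, (ENNReal.ofReal (s u))⁻¹ := ENNReal.tsum_le_tsum hann
    _ = ∫⁻ u in ⋃ k, A k, (ENNReal.ofReal (s u))⁻¹ := (lintegral_iUnion hAm hAdisj _).symm
    _ ≤ ∫⁻ u in ball (0:(EuclideanSpace ℝ (Fin 2))) ε, (ENNReal.ofReal (s u))⁻¹ := by
        apply lintegral_mono_set
        exact (Set.iUnion_subset hAsub).trans (ball_subset_ball hrε)
end

section
/- Let s : ℝ² → ℝ≥0 be defined by s(u) = (u₁ - u₂)² for u = (u₁,u₂). Then for every ε > 0 and i ∈ {1,2}, ∫_{B(0,ε)} u_i² / s(u) du = ∞, yet the polynomial Q(u) = u₁ - u₂ satisfies ∂₁Q(0) ≠ 0 and ∫_{B(0,ε)} Q(u)² / s(u) du < ∞. -/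
open MeasureTheory Metric

open scoped ENNReal


lemma oneD {a b x c : ℝ} (hax : a < x) (hxb : x < b) (hc : 0 < c) :
    ∫⁻ y in Set.Ioo a b, ENNReal.ofReal c / ENNReal.ofReal ((x - y) ^ 2) = ⊤ := by
  set I := ∫⁻ y in Set.Ioo a b, ENNReal.ofReal c / ENNReal.ofReal ((x - y) ^ 2) with hI
  by_contra hItop
  obtain ⟨n, hn⟩ := exists_nat_gt (max (1 / (b - x)) (I.toReal / c))
  have hbx : 0 < b - x := by linarith
  have hn1 : (1:ℝ) / (b - x) < n := lt_of_le_of_lt (le_max_left _ _) hn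
  have hn0 : (0:ℝ) < n := lt_trans (by positivity) hn1
  have hrn : (1:ℝ) / n < b - x := by
    rw [div_lt_iff₀ hbx] at hn1
    rw [div_lt_iff₀ hn0]
    nlinarith
  have hrpos : (0:ℝ) < 1 / n := by positivity
  have hsub : Set.Ioo x (x + 1 / n) ⊆ Set.Ioo a b := by
    intro y hy
    exact ⟨by linarith [hy.1], by linarith [hy.2]⟩
  have hbound : ∀ y ∈ Set.Ioo x (x + 1 / n),
      ENNReal.ofReal (c * n ^ 2) ≤ ENNReal.ofReal c / ENNReal.ofReal ((x - y) ^ 2) := by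
    intro y hy
    have h1 : (x - y) ^ 2 ≤ ((1:ℝ) / n) ^ 2 := by
      have := hy.1; have := hy.2
      nlinarith
    have : ENNReal.ofReal ((x - y) ^ 2) ≤ ENNReal.ofReal (((1:ℝ)/n) ^ 2) :=
      ENNReal.ofReal_le_ofReal h1
    refine le_trans (le_of_eq ?_) (ENNReal.div_le_div_left this _)
    rw [← ENNReal.ofReal_div_of_pos (by positivity)]
    congr 1
    field_simp
  have hge : ENNReal.ofReal (c * n ^ 2) * ENNReal.ofReal (1 / n) ≤ I := by
    calc ENNReal.ofReal (c * n ^ 2) * ENNReal.ofReal (1 / n)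
        = ∫⁻ _ in Set.Ioo x (x + 1/n), ENNReal.ofReal (c * n ^ 2) := by
          rw [setLIntegral_const, Real.volume_Ioo]; ring_nf
      _ ≤ ∫⁻ y in Set.Ioo x (x + 1/n), ENNReal.ofReal c / ENNReal.ofReal ((x - y) ^ 2) :=
          setLIntegral_mono' measurableSet_Ioo hbound
      _ ≤ I := lintegral_mono_set hsub
  rw [← ENNReal.ofReal_mul (by positivity)] at hge
  have hval : c * n ^ 2 * (1 / n) = c * n := by field_simp
  rw [hval] at hge
  have := (ENNReal.ofReal_le_iff_le_toReal hItop).mp hge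
  have hn2 : I.toReal / c < n := lt_of_le_of_lt (le_max_right _ _) hn
  rw [div_lt_iff₀ hc] at hn2
  nlinarith

lemma twoD {a b c : ℝ} (hab : a < b) (hc : 0 < c) :
    ∫⁻ z : ℝ × ℝ in Set.Ioo a b ×ˢ Set.Ioo a b,
      ENNReal.ofReal c / ENNReal.ofReal ((z.1 - z.2) ^ 2) = ⊤ := by
  have hmeas : Measurable fun z : ℝ × ℝ => ENNReal.ofReal c / ENNReal.ofReal ((z.1 - z.2) ^ 2) :=
    Measurable.div measurable_const
      (Measurable.ennreal_ofReal ((measurable_fst.sub measurable_snd).pow_const 2))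
  rw [Measure.volume_eq_prod, ← Measure.prod_restrict, lintegral_prod _ hmeas.aemeasurable]
  have hinner : ∀ x ∈ Set.Ioo a b,
      (⊤ : ℝ≥0∞) ≤ ∫⁻ y in Set.Ioo a b, ENNReal.ofReal c / ENNReal.ofReal ((x - y) ^ 2) := by
    intro x hx
    exact le_of_eq (oneD hx.1 hx.2 hc).symm
  refine top_le_iff.mp ?_
  calc (⊤:ℝ≥0∞) = ⊤ * volume (Set.Ioo a b) := by
        rw [Real.volume_Ioo, ENNReal.top_mul]
        simp [ENNReal.ofReal_pos]; linarith
    _ = ∫⁻ _ in Set.Ioo a b, (⊤:ℝ≥0∞) := (setLIntegral_const _ _).symm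
    _ ≤ _ := setLIntegral_mono' measurableSet_Ioo hinner


/-- For `s u = (u₁ - u₂)²` on ℝ², the integrals `∫_{B(0,ε)} u_i²/s` diverge
for both coordinates, yet `Q(u) = u₁ - u₂` has `∂₁Q(0) ≠ 0` and `∫_{B(0,ε)} Q²/s < ∞`
(divisions interpreted in `ℝ≥0∞`, so `a/0 = ∞` for `a ≠ 0`). -/
theorem stmt2 (s : EuclideanSpace ℝ (Fin 2) → ℝ)
    (hs : ∀ u, s u = (u 0 - u 1) ^ 2) :
    (∀ ε > 0, ∀ i : Fin 2,
      ∫⁻ u in ball (0 : EuclideanSpace ℝ (Fin 2)) ε,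
        ENNReal.ofReal ((u i) ^ 2) / ENNReal.ofReal (s u) = ⊤) ∧
    (fderiv ℝ (fun u : EuclideanSpace ℝ (Fin 2) => u 0 - u 1) 0
        (EuclideanSpace.single 0 1) ≠ 0) ∧
    (∀ ε > 0,
      ∫⁻ u in ball (0 : EuclideanSpace ℝ (Fin 2)) ε,
        ENNReal.ofReal ((u 0 - u 1) ^ 2) / ENNReal.ofReal (s u) ≠ ⊤) := by
  refine ⟨?_, ?_, ?_⟩
  · intro ε hε i
    set a := ε / 4 with ha
    set b := ε / 2 with hb
    have hab : a < b := by rw [ha, hb]; linarith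
    have ha0 : 0 < a := by rw [ha]; linarith
    set em := (MeasurableEquiv.toLp 2 (Fin 2 → ℝ)).symm.trans MeasurableEquiv.finTwoArrow with hem
    have hmp : MeasurePreserving (⇑em) volume volume :=
      (volume_preserving_finTwoArrow ℝ).comp
        (EuclideanSpace.volume_preserving_symm_measurableEquiv_toLp (Fin 2))
    set T := em ⁻¹' (Set.Ioo a b ×ˢ Set.Ioo a b) with hT
    have hTmem : ∀ u : EuclideanSpace ℝ (Fin 2),
        u ∈ T ↔ u 0 ∈ Set.Ioo a b ∧ u 1 ∈ Set.Ioo a b := fun u => Iff.rfl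
    have hTmeas : MeasurableSet T :=
      em.measurable (measurableSet_Ioo.prod measurableSet_Ioo)
    have hTsub : T ⊆ ball (0 : EuclideanSpace ℝ (Fin 2)) ε := by
      intro u hu
      obtain ⟨h0, h1⟩ := (hTmem u).mp hu
      rw [mem_ball_zero_iff, EuclideanSpace.norm_eq]
      simp only [Fin.sum_univ_two, Real.norm_eq_abs, sq_abs]
      rw [Real.sqrt_lt' hε]
      have := h0.1; have := h0.2; have := h1.1; have := h1.2
      rw [ha] at *; rw [hb] at *
      nlinarith
    refine top_le_iff.mp ?_
    calc (⊤:ℝ≥0∞)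
        = ∫⁻ z : ℝ × ℝ in Set.Ioo a b ×ˢ Set.Ioo a b,
            ENNReal.ofReal (a ^ 2) / ENNReal.ofReal ((z.1 - z.2) ^ 2) :=
          (twoD hab (by positivity)).symm
      _ = ∫⁻ u in T,
            ENNReal.ofReal (a ^ 2) / ENNReal.ofReal ((u 0 - u 1) ^ 2) :=
          (hmp.setLIntegral_comp_preimage_emb em.measurableEmbedding
            (fun z => ENNReal.ofReal (a ^ 2) / ENNReal.ofReal ((z.1 - z.2) ^ 2))
            (Set.Ioo a b ×ˢ Set.Ioo a b)).symm
      _ ≤ ∫⁻ u in T, ENNReal.ofReal ((u i) ^ 2) / ENNReal.ofReal (s u) := by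
          refine setLIntegral_mono' hTmeas fun u hu => ?_
          obtain ⟨h0, h1⟩ := (hTmem u).mp hu
          rw [hs u]
          refine ENNReal.div_le_div_right (ENNReal.ofReal_le_ofReal ?_) _
          have hui : a < u i := by
            fin_cases i
            · exact h0.1
            · exact h1.1
          nlinarith
      _ ≤ _ := lintegral_mono_set hTsub
  · have hd : HasFDerivAt (fun u : EuclideanSpace ℝ (Fin 2) => u 0 - u 1)
        ((EuclideanSpace.proj (0 : Fin 2) : EuclideanSpace ℝ (Fin 2) →L[ℝ] ℝ)
          - EuclideanSpace.proj (1 : Fin 2)) 0 :=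
      ((EuclideanSpace.proj (0 : Fin 2) :
          EuclideanSpace ℝ (Fin 2) →L[ℝ] ℝ).hasFDerivAt (x := 0)).sub
        ((EuclideanSpace.proj (1 : Fin 2) :
          EuclideanSpace ℝ (Fin 2) →L[ℝ] ℝ).hasFDerivAt (x := 0))
    rw [hd.fderiv]
    simp [EuclideanSpace.proj, PiLp.proj_apply, EuclideanSpace.single_apply]
  · intro ε hε
    have hle : ∫⁻ u in ball (0 : EuclideanSpace ℝ (Fin 2)) ε,
        ENNReal.ofReal ((u 0 - u 1) ^ 2) / ENNReal.ofReal (s u)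
        ≤ volume (ball (0 : EuclideanSpace ℝ (Fin 2)) ε) := by
      rw [← setLIntegral_one]
      refine setLIntegral_mono' measurableSet_ball fun u _ => ?_
      rw [hs u]
      exact ENNReal.div_self_le_one
    exact ne_top_of_le_ne_top measure_ball_lt_top.ne hle
end

section
/- Let s : ℝ² → ℝ≥0 satisfy s(u) = u₁⁴·(1 + o(1)) as u → 0. If Q is a polynomial in two variables with ∫_{B(0,ε)} |Q(u)|²/s(u) du < ∞ for some ε > 0, and we write Q(u) = P(u₂) + u₁ R(u₂) + u₁² S(u₁,u₂) with P, R, S polynomials, then P = 0 and R = 0. Equivalently, all coefficients of Q on monomials u₁^a u₂^m with a ∈ {0,1} vanish. -/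
open MeasureTheory Metric Filter Topology Set
open scoped ENNReal
set_option maxHeartbeats 1000000

section Aux

lemma aux_div1d (k : ℕ) (hk : k ≤ 1) (c δ : ℝ) (hc : 0 < c) (hδ : 0 < δ) :
    ∫⁻ x in Set.Ioo (0:ℝ) δ, ENNReal.ofReal (c * x ^ (2*k)) / ENNReal.ofReal (2 * x ^ 4) = ⊤ := by
  have hcg : ∀ x ∈ Ioo (0:ℝ) δ,
      ENNReal.ofReal (c * x ^ (2*k)) / ENNReal.ofReal (2 * x ^ 4)
        = ENNReal.ofReal (c * x ^ (2*k) / (2 * x ^ 4)) := by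
    intro x hx
    have hx0 : (0:ℝ) < x := hx.1
    rw [ENNReal.ofReal_div_of_pos (by positivity)]
  rw [setLIntegral_congr_fun measurableSet_Ioo hcg]
  by_contra hfin
  have hmeas : Measurable fun x : ℝ => c * x ^ (2*k) / (2 * x ^ 4) := by fun_prop
  have hint : IntegrableOn (fun x : ℝ => c * x ^ (2*k) / (2 * x ^ 4)) (Ioo 0 δ) := by
    refine ⟨hmeas.aestronglyMeasurable.restrict, ?_⟩
    rw [HasFiniteIntegral]
    have : ∫⁻ x in Ioo (0:ℝ) δ, ‖c * x ^ (2*k) / (2 * x ^ 4)‖ₑ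
        = ∫⁻ x in Ioo (0:ℝ) δ, ENNReal.ofReal (c * x ^ (2*k) / (2 * x ^ 4)) := by
      refine setLIntegral_congr_fun measurableSet_Ioo ?_
      intro x hx
      have hx0 : (0:ℝ) < x := hx.1
      exact Real.enorm_eq_ofReal (by positivity)
    rw [this, lt_top_iff_ne_top]
    exact hfin
  have hrpow : IntegrableOn (fun x : ℝ => x ^ ((2*k : ℝ) - 4)) (Ioo 0 δ) := by
    refine MeasureTheory.IntegrableOn.congr_fun (hint.const_mul (2/c)) ?_ measurableSet_Ioo
    intro x hx
    have hx0 : (0:ℝ) < x := hx.1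
    have h1 : x ^ (2*k : ℕ) = x ^ ((2*k : ℕ) : ℝ) := (Real.rpow_natCast x (2*k)).symm
    have h4 : x ^ (4 : ℕ) = x ^ ((4 : ℕ) : ℝ) := (Real.rpow_natCast x 4).symm
    simp only
    rw [h1, h4, show (2*(k:ℝ) - 4) = ((2*k:ℕ):ℝ) - ((4:ℕ):ℝ) by push_cast; ring,
      Real.rpow_sub hx0]
    field_simp
  rw [intervalIntegral.integrableOn_Ioo_rpow_iff hδ] at hrpow
  have : (2*(k:ℝ)) - 4 ≤ -2 := by
    have : (k:ℝ) ≤ 1 := by exact_mod_cast hk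
    linarith
  linarith

noncomputable abbrev auxPhi2 : EuclideanSpace ℝ (Fin 2) ≃ᵐ ℝ × ℝ :=
  (MeasurableEquiv.toLp 2 (Fin 2 → ℝ)).symm.trans (MeasurableEquiv.piFinTwo fun _ : Fin 2 => ℝ)

lemma auxPhi2_mp : MeasurePreserving auxPhi2 volume volume :=
  (volume_preserving_piFinTwo fun _ : Fin 2 => ℝ).comp
    (EuclideanSpace.volume_preserving_symm_measurableEquiv_toLp (Fin 2))

lemma auxPhi2_apply (u : EuclideanSpace ℝ (Fin 2)) : auxPhi2 u = (u 0, u 1) := rfl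

lemma aux_rect_lintegral (g : ℝ → ℝ≥0∞) (hg : Measurable g) (A B : Set ℝ) :
    ∫⁻ u in auxPhi2 ⁻¹' (A ×ˢ B), g (u 0) = (∫⁻ x in A, g x) * volume B := by
  have h1 : ∫⁻ u in auxPhi2 ⁻¹' (A ×ˢ B), g (u 0)
      = ∫⁻ z in A ×ˢ B, g z.1 :=
    auxPhi2_mp.setLIntegral_comp_preimage_emb auxPhi2.measurableEmbedding
      (fun z => g z.1) (A ×ˢ B)
  rw [h1]
  rw [Measure.volume_eq_prod, ← Measure.prod_restrict]
  have h2 : ∫⁻ z : ℝ × ℝ, g z.1 ∂((volume.restrict A).prod (volume.restrict B))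
      = (∫⁻ x in A, g x) * ∫⁻ y in B, (1:ℝ≥0∞) := by
    have := lintegral_prod_mul (μ := volume.restrict A) (ν := volume.restrict B)
      hg.aemeasurable (aemeasurable_const (b := (1:ℝ≥0∞)))
    simpa using this
  rw [h2, lintegral_one, Measure.restrict_apply_univ]

lemma aux_cons_eq (a m : ℕ) :
    (Finsupp.single (0 : Fin 2) a + Finsupp.single (1 : Fin 2) m)
      = Finsupp.cons a (Finsupp.single (0 : Fin 1) m) := by
  ext i
  refine Fin.cases ?_ (fun j => ?_) i
  · simp
  · have hj : j = 0 := Subsingleton.elim _ _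
    subst hj
    rw [Finsupp.cons_succ]
    simp [Finsupp.single_apply, Fin.ext_iff]

noncomputable def auxToUni (P : MvPolynomial (Fin 1) ℝ) : Polynomial ℝ :=
  MvPolynomial.aeval (fun _ : Fin 1 => Polynomial.X) P

lemma auxToUni_eval (P : MvPolynomial (Fin 1) ℝ) (y : ℝ) :
    Polynomial.eval y (auxToUni P) = MvPolynomial.eval (fun _ : Fin 1 => y) P := by
  have h := MvPolynomial.comp_aeval (f := fun _ : Fin 1 => Polynomial.X)
    (φ := Polynomial.aeval y (R := ℝ))
  have h2 := congrFun (congrArg (fun g => g.toFun) h) P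
  simp only [AlgHom.toFun_eq_coe, AlgHom.coe_comp, Function.comp_apply] at h2
  have : (Polynomial.aeval y) (auxToUni P) = MvPolynomial.aeval (fun _ : Fin 1 => y) P := by
    simpa [auxToUni] using h2
  rw [← Polynomial.coe_aeval_eq_eval, this, ← MvPolynomial.coe_aeval_eq_eval]
  rfl

lemma aux_exists_nonroot (P : MvPolynomial (Fin 1) ℝ) (hP : P ≠ 0) (r : ℝ) (hr : 0 < r) :
    ∃ y ∈ Set.Ioo 0 r, MvPolynomial.eval (fun _ : Fin 1 => y) P ≠ 0 := by
  have hp : auxToUni P ≠ 0 := by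
    intro h
    apply hP
    apply MvPolynomial.funext
    intro x
    have hx : x = fun _ : Fin 1 => x 0 := by
      funext i
      have : i = 0 := Subsingleton.elim _ _
      rw [this]
    rw [hx, map_zero, ← auxToUni_eval, h, Polynomial.eval_zero]
  have hfin := Polynomial.finite_setOf_isRoot hp
  have hIoo : (Set.Ioo (0:ℝ) r).Infinite := Set.Ioo_infinite hr
  obtain ⟨y, hy⟩ := (hIoo.diff hfin).nonempty
  refine ⟨y, hy.1, ?_⟩
  rw [← auxToUni_eval]
  exact hy.2

lemma aux_slice_zero (Q₂ : MvPolynomial (Fin 2) ℝ) (s : Fin 1 → ℝ) :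
    MvPolynomial.eval (Fin.cons 0 s) Q₂
      = MvPolynomial.eval s ((MvPolynomial.finSuccEquiv ℝ 1 Q₂).coeff 0) := by
  rw [MvPolynomial.eval_eq_eval_mv_eval', ← Polynomial.coeff_zero_eq_eval_zero,
    MvPolynomial.coeff_eval_eq_eval_coeff]

end Aux

/-- If `s : ℝ² → ℝ≥0` satisfies `s u = u₁⁴ (1 + o(1))` as `u → 0`, and `Q` is a
two-variable polynomial with `∫_{B(0,ε)} Q²/s < ∞` for some `ε > 0`, then every coefficient of
`Q` on a monomial `u₁^a u₂^m` with `a ∈ {0,1}` vanishes. -/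
theorem stmt3 (s : EuclideanSpace ℝ (Fin 2) → ℝ) (hpos : ∀ u, 0 ≤ s u)
    (e : EuclideanSpace ℝ (Fin 2) → ℝ)
    (hse : ∀ u, s u = (u 0) ^ 4 * (1 + e u))
    (he : Tendsto e (nhds 0) (nhds 0))
    (Q : MvPolynomial (Fin 2) ℝ) (ε : ℝ) (hε : 0 < ε)
    (hQ : ∫⁻ u in ball (0 : EuclideanSpace ℝ (Fin 2)) ε,
        ENNReal.ofReal ((MvPolynomial.eval (fun i => u i) Q) ^ 2) / ENNReal.ofReal (s u)
        ≠ ⊤) :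
    ∀ a m : ℕ, a ≤ 1 →
      MvPolynomial.coeff (Finsupp.single (0 : Fin 2) a + Finsupp.single (1 : Fin 2) m) Q = 0 := by
  intro a m ha
  by_contra hne
  set F := MvPolynomial.finSuccEquiv ℝ 1 Q with hF
  have hFa : F.coeff a ≠ 0 := by
    intro h
    apply hne
    rw [aux_cons_eq, ← MvPolynomial.finSuccEquiv_coeff_coeff, ← hF, h, MvPolynomial.coeff_zero]
  obtain ⟨k, hk, Q₂, hfac, hP⟩ :
      ∃ k ≤ 1, ∃ Q₂, Q = MvPolynomial.X 0 ^ k * Q₂ ∧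
        (MvPolynomial.finSuccEquiv ℝ 1 Q₂).coeff 0 ≠ 0 := by
    by_cases h0 : F.coeff 0 = 0
    · have hF1 : F.coeff 1 ≠ 0 := by
        interval_cases a
        · exact absurd h0 hFa
        · exact hFa
      refine ⟨1, le_rfl, (MvPolynomial.finSuccEquiv ℝ 1).symm F.divX, ?_, ?_⟩
      · apply (MvPolynomial.finSuccEquiv ℝ 1).injective
        rw [map_mul, pow_one, AlgEquiv.apply_symm_apply, MvPolynomial.finSuccEquiv_X_zero]
        have hX := Polynomial.X_mul_divX_add F
        rw [h0, map_zero, add_zero] at hX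
        rw [← hF, hX]
      · rw [AlgEquiv.apply_symm_apply, Polynomial.coeff_divX]
        exact hF1
    · exact ⟨0, Nat.zero_le 1, Q, by rw [pow_zero, one_mul], h0⟩
  set P := (MvPolynomial.finSuccEquiv ℝ 1 Q₂).coeff 0 with hPdef
  -- a neighborhood where |e| < 1
  have he1 : ∀ᶠ u in 𝓝 (0 : EuclideanSpace ℝ (Fin 2)), dist (e u) 0 < 1 :=
    Metric.tendsto_nhds.mp he 1 one_pos
  obtain ⟨δ₀, hδ₀, hδ₀e⟩ := Metric.eventually_nhds_iff.mp he1
  set r0 := min ε δ₀ with hr0def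
  have hr0 : 0 < r0 := lt_min hε hδ₀
  -- pick y₀
  obtain ⟨y₀, hy₀, hv⟩ := aux_exists_nonroot P hP (r0/4) (by positivity)
  set v := MvPolynomial.eval (fun _ : Fin 1 => y₀) P with hvdef
  -- r function
  set rf : EuclideanSpace ℝ (Fin 2) → ℝ :=
    fun u => MvPolynomial.eval (fun i => u i) Q₂ with hrfdef
  have hrf_cont : Continuous rf := by
    have h1 : Continuous fun u : EuclideanSpace ℝ (Fin 2) => (fun i => u i : Fin 2 → ℝ) :=
      (PiLp.continuousLinearEquiv 2 ℝ (fun _ : Fin 2 => ℝ)).continuous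
    exact (MvPolynomial.continuous_eval (p := Q₂)).comp h1
  set u₀ : EuclideanSpace ℝ (Fin 2) := (EuclideanSpace.equiv (Fin 2) ℝ).symm ![0, y₀] with hu₀def
  have hu₀c : (fun i => u₀ i) = Fin.cons (0:ℝ) (fun _ : Fin 1 => y₀) := by
    funext i
    refine Fin.cases ?_ (fun j => ?_) i
    · rfl
    · have hj : j = 0 := Subsingleton.elim _ _
      subst hj
      rfl
  have hrfu₀ : rf u₀ = v := by
    rw [hrfdef]
    simp only
    rw [hu₀c, aux_slice_zero]
  have hvpos : 0 < |v| := abs_pos.mpr hv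
  obtain ⟨δ₁, hδ₁, hδ₁r⟩ := Metric.continuousAt_iff.mp hrf_cont.continuousAt (|v|/2) (by positivity)
  rw [hrfu₀] at hδ₁r
  set δ := min (r0/4) (δ₁/2) with hδdef
  have hδ : 0 < δ := lt_min (by positivity) (by positivity)
  have hδr0 : δ ≤ r0/4 := min_le_left _ _
  have hδδ₁ : δ ≤ δ₁/2 := min_le_right _ _
  set T := auxPhi2 ⁻¹' (Ioo 0 δ ×ˢ Ioo (y₀ - δ) (y₀ + δ)) with hTdef
  have hTm : MeasurableSet T :=
    auxPhi2.measurable (measurableSet_Ioo.prod measurableSet_Ioo)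
  have hmemT : ∀ u, u ∈ T ↔ (u 0 ∈ Ioo 0 δ ∧ u 1 ∈ Ioo (y₀ - δ) (y₀ + δ)) := by
    intro u
    rw [hTdef, Set.mem_preimage, auxPhi2_apply, Set.mem_prod]
  set c := (v/2)^2 with hcdef
  have hc : 0 < c := by
    have : v ≠ 0 := hv
    positivity
  set g : ℝ → ℝ≥0∞ :=
    fun x => ENNReal.ofReal (c * x ^ (2*k)) / ENNReal.ofReal (2 * x ^ 4) with hgdef
  have hgmeas : Measurable g := by
    apply Measurable.div
    · exact ENNReal.measurable_ofReal.comp (by fun_prop)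
    · exact ENNReal.measurable_ofReal.comp (by fun_prop)
  -- bounds for u ∈ T
  have hy₀1 : 0 < y₀ := hy₀.1
  have hy₀2 : y₀ < r0/4 := hy₀.2
  have hballT : ∀ u ∈ T, dist u (0 : EuclideanSpace ℝ (Fin 2)) < r0 := by
    intro u hu
    obtain ⟨⟨hx1, hx2⟩, hy1, hy2⟩ := (hmemT u).mp hu
    rw [EuclideanSpace.dist_eq]
    rw [show (Finset.univ : Finset (Fin 2)) = {0, 1} by decide]
    rw [Finset.sum_insert (by decide), Finset.sum_singleton]
    have h0 : (0 : EuclideanSpace ℝ (Fin 2)) 0 = 0 := rfl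
    have h1 : (0 : EuclideanSpace ℝ (Fin 2)) 1 = 0 := rfl
    rw [h0, h1, Real.dist_eq, Real.dist_eq]
    rw [Real.sqrt_lt' hr0]
    have e1 : |u 0 - 0| ^ 2 = (u 0) ^ 2 := by rw [sub_zero, sq_abs]
    have e2 : |u 1 - 0| ^ 2 = (u 1) ^ 2 := by rw [sub_zero, sq_abs]
    rw [e1, e2]
    nlinarith
  have key : ∀ u ∈ T, g (u 0)
      ≤ ENNReal.ofReal ((MvPolynomial.eval (fun i => u i) Q) ^ 2) / ENNReal.ofReal (s u) := by
    intro u hu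
    obtain ⟨⟨hx1, hx2⟩, hy1, hy2⟩ := (hmemT u).mp hu
    -- u is near u₀
    have hdistu₀ : dist u u₀ < δ₁ := by
      rw [EuclideanSpace.dist_eq]
      rw [show (Finset.univ : Finset (Fin 2)) = {0, 1} by decide]
      rw [Finset.sum_insert (by decide), Finset.sum_singleton]
      have h0 : u₀ 0 = 0 := rfl
      have h1 : u₀ 1 = y₀ := rfl
      rw [h0, h1, Real.dist_eq, Real.dist_eq]
      rw [Real.sqrt_lt' hδ₁]
      have e1 : |u 0 - 0| ^ 2 = (u 0) ^ 2 := by rw [sub_zero, sq_abs]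
      have e2 : |u 1 - y₀| ^ 2 = (u 1 - y₀) ^ 2 := sq_abs _
      rw [e1, e2]
      nlinarith
    have hrfu : |v|/2 ≤ |rf u| := by
      have := hδ₁r hdistu₀
      rw [Real.dist_eq] at this
      have h2 : |v| - |rf u - v| ≤ |rf u| := by
        have := abs_sub_abs_le_abs_sub v (rf u)
        have h3 := abs_sub_comm (rf u) v
        linarith [abs_sub_abs_le_abs_sub v (rf u), (abs_sub_comm v (rf u)).le]
      linarith
    -- e bound
    have hball0 : dist u (0 : EuclideanSpace ℝ (Fin 2)) < r0 := hballT u hu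
    have hec : |e u| < 1 := by
      have := hδ₀e (show dist u 0 < δ₀ from lt_of_lt_of_le hball0 (min_le_right _ _))
      rwa [Real.dist_eq, sub_zero] at this
    have hsle : s u ≤ 2 * (u 0) ^ 4 := by
      rw [hse u]
      have h4 : (0:ℝ) ≤ (u 0) ^ 4 := by positivity
      nlinarith [abs_lt.mp hec]
    -- numerator bound
    have hevalQ : MvPolynomial.eval (fun i => u i) Q = (u 0) ^ k * rf u := by
      rw [hfac, map_mul, map_pow, MvPolynomial.eval_X]
    have hnum : c * (u 0) ^ (2*k) ≤ (MvPolynomial.eval (fun i => u i) Q) ^ 2 := by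
      rw [hevalQ]
      have hx2k : (0:ℝ) ≤ (u 0) ^ (2*k) := by positivity
      have hrf2 : v^2/4 ≤ (rf u)^2 := by
        nlinarith [sq_abs (rf u), sq_abs v]
      have hexp : ((u 0) ^ k * rf u) ^ 2 = (u 0)^(2*k) * (rf u)^2 := by
        rw [mul_pow, ← pow_mul, mul_comm k 2]
      rw [hexp, hcdef]
      nlinarith [mul_nonneg hx2k (sub_nonneg.mpr hrf2)]
    refine ENNReal.div_le_div (ENNReal.ofReal_le_ofReal hnum) (ENNReal.ofReal_le_ofReal hsle)
  -- divergence
  have hTint : ∫⁻ u in T, g (u 0) = ⊤ := by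
    rw [hTdef, aux_rect_lintegral g hgmeas]
    rw [aux_div1d k hk c δ hc hδ, Real.volume_Ioo]
    rw [ENNReal.top_mul]
    rw [Ne, ENNReal.ofReal_eq_zero, not_le]
    linarith
  have hmono : ∫⁻ u in T, g (u 0)
      ≤ ∫⁻ u in T,
        ENNReal.ofReal ((MvPolynomial.eval (fun i => u i) Q) ^ 2) / ENNReal.ofReal (s u) := by
    rw [← lintegral_indicator hTm, ← lintegral_indicator hTm]
    apply lintegral_mono
    intro u
    by_cases hu : u ∈ T
    · rw [Set.indicator_of_mem hu, Set.indicator_of_mem hu]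
      exact key u hu
    · rw [Set.indicator_of_notMem hu, Set.indicator_of_notMem hu]
  have hsub : T ⊆ ball (0 : EuclideanSpace ℝ (Fin 2)) ε := by
    intro u hu
    rw [mem_ball]
    exact lt_of_lt_of_le (hballT u hu) (min_le_left _ _)
  have hfinal : (⊤ : ℝ≥0∞) ≤ ∫⁻ u in ball (0 : EuclideanSpace ℝ (Fin 2)) ε,
      ENNReal.ofReal ((MvPolynomial.eval (fun i => u i) Q) ^ 2) / ENNReal.ofReal (s u) := by
    calc (⊤ : ℝ≥0∞) = ∫⁻ u in T, g (u 0) := hTint.symm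
    _ ≤ ∫⁻ u in T,
        ENNReal.ofReal ((MvPolynomial.eval (fun i => u i) Q) ^ 2) / ENNReal.ofReal (s u) := hmono
    _ ≤ _ := lintegral_mono_set hsub
  exact hQ (top_le_iff.mp hfinal)
end

section
/- Consider s(u) = (u-1)²(u+1)² on the torus [-π,π], and let ψ be a trigonometric polynomial of degree ≤ 1, ψ(u) = a_{-1}e^{-iu} + a₀ + a₁e^{iu}, with ∫_{-π}^{π} |ψ(u)|²/s(u) du < ∞ and ψ not identically zero. Then, writing e^{iu}ψ(u) = a(e^{iu} - z₁)(e^{iu} - z₂), we must have {z₁, z₂} = {e^{i}, e^{-i}}. Consequently ψ is an even function of u, so ψ'(0) = 0, while ψ(0) ≠ 0 is possible; the example realizes a degree-1 process which is 1-rigid but not 0-rigid. -/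
open MeasureTheory Real Complex

-- non-integrability of x^{-2} near 0, as lintegral = ⊤
lemma lint_top {δ : ℝ} (hδ : 0 < δ) :
    ∫⁻ x in Set.Ioo (0:ℝ) δ, ENNReal.ofReal (x ^ (-2:ℝ)) = ⊤ := by
  have hni : ¬ IntegrableOn (fun x : ℝ => x ^ (-2:ℝ)) (Set.Ioo 0 δ) := by
    rw [intervalIntegral.integrableOn_Ioo_rpow_iff hδ]; norm_num
  by_contra h
  apply hni
  refine ⟨(measurable_id.pow_const _).aestronglyMeasurable, ?_⟩
  rw [hasFiniteIntegral_iff_ofReal ?nn]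
  · exact Ne.lt_top h
  case nn =>
    filter_upwards [ae_restrict_mem measurableSet_Ioo] with x hx
    exact Real.rpow_nonneg hx.1.le _

lemma lint_top' (t0 : ℝ) {δ : ℝ} (hδ : 0 < δ) :
    ∫⁻ u in Set.Ioo t0 (t0 + δ), ENNReal.ofReal ((u - t0) ^ (-2:ℝ)) = ⊤ := by
  have hmp : MeasurePreserving (· + t0) (volume : Measure ℝ) volume :=
    measurePreserving_add_right volume t0
  have hpre : (· + t0) ⁻¹' Set.Ioo t0 (t0 + δ) = Set.Ioo 0 δ := by
    ext x
    simp only [Set.mem_preimage, Set.mem_Ioo]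
    constructor <;> rintro ⟨h1, h2⟩ <;> constructor <;> linarith
  have := hmp.setLIntegral_comp_preimage (s := Set.Ioo t0 (t0 + δ)) measurableSet_Ioo
    (f := fun u => ENNReal.ofReal ((u - t0) ^ (-2:ℝ)))
    (((measurable_id.sub_const t0).pow_const _).ennreal_ofReal)
  rw [hpre] at this
  rw [← this]
  simp only [add_sub_cancel_right]
  exact lint_top hδ

lemma vanish (ψ : ℝ → ℂ) (hc : Continuous ψ) (t0 : ℝ) (ht0 : t0 = 1 ∨ t0 = -1)
    (hint : ∫⁻ u in Set.Ioc (-π) π,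
      (‖ψ u‖₊ : ENNReal) ^ 2 / ENNReal.ofReal ((u - 1) ^ 2 * (u + 1) ^ 2) ≠ ⊤) :
    ψ t0 = 0 := by
  by_contra hψ0
  have hm : 0 < ‖ψ t0‖ := norm_pos_iff.2 hψ0
  set m := ‖ψ t0‖ with hmdef
  obtain ⟨δ, hδpos, hδ⟩ := Metric.continuousAt_iff.1 (hc.continuousAt (x := t0)) (m/2) (by linarith)
  set δ' : ℝ := min (δ/2) (1/2) with hδ'def
  have hδ'pos : 0 < δ' := lt_min (by linarith) (by norm_num)
  have hδ'le : δ' ≤ 1/2 := min_le_right _ _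
  have hδ'lt : δ' < δ := lt_of_le_of_lt (min_le_left _ _) (by linarith)
  have ht0b : -1 ≤ t0 ∧ t0 ≤ 1 := by rcases ht0 with rfl | rfl <;> norm_num
  -- the set
  have hsub : Set.Ioo t0 (t0 + δ') ⊆ Set.Ioc (-π) π := by
    intro u hu
    have h3 : (3:ℝ) < π := Real.pi_gt_three
    constructor
    · have := hu.1; linarith [ht0b.1]
    · have := hu.2; linarith [ht0b.2]
  -- lower bound on the set
  have hlow : ∀ u ∈ Set.Ioo t0 (t0 + δ'),
      ENNReal.ofReal ((m/2)^2 / 16) * ENNReal.ofReal ((u - t0) ^ (-2:ℝ))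
        ≤ (‖ψ u‖₊ : ENNReal) ^ 2 / ENNReal.ofReal ((u - 1) ^ 2 * (u + 1) ^ 2) := by
    intro u hu
    have hut : 0 < u - t0 := by linarith [hu.1]
    have hnorm : m/2 ≤ ‖ψ u‖ := by
      have h1 : dist u t0 < δ := by
        rw [Real.dist_eq, abs_of_pos hut]; linarith [hu.2]
      have h2 := hδ h1
      rw [dist_eq_norm] at h2
      have := norm_sub_norm_le (ψ t0) (ψ u)
      rw [norm_sub_rev] at h2
      linarith
    have hsb : (u - 1) ^ 2 * (u + 1) ^ 2 ≤ 16 * (u - t0) ^ 2 := by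
      rcases ht0 with rfl | rfl
      · have h1 : (u+1)^2 ≤ 16 := by nlinarith [hu.1, hu.2, hδ'le]
        nlinarith [mul_le_mul_of_nonneg_left h1 (sq_nonneg (u-1))]
      · have h1 : (u-1)^2 ≤ 16 := by nlinarith [hu.1, hu.2, hδ'le]
        nlinarith [mul_le_mul_of_nonneg_left h1 (sq_nonneg (u+1))]
    have hx : (u - t0) ^ (-2:ℝ) = ((u - t0)^2)⁻¹ := by
      rw [show (-2:ℝ) = -((2:ℕ):ℝ) by norm_num, Real.rpow_neg hut.le, Real.rpow_natCast]
    have hL : ENNReal.ofReal ((m/2)^2 / 16) * ENNReal.ofReal ((u - t0) ^ (-2:ℝ))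
        = ENNReal.ofReal ((m/2)^2) / ENNReal.ofReal (16 * (u - t0) ^ 2) := by
      rw [hx, ← ENNReal.ofReal_mul (by positivity),
        ← ENNReal.ofReal_div_of_pos (by positivity : (0:ℝ) < 16 * (u - t0) ^ 2)]
      congr 1
      field_simp
    rw [hL]
    refine ENNReal.div_le_div ?_ (ENNReal.ofReal_le_ofReal hsb)
    calc ENNReal.ofReal ((m/2)^2) ≤ ENNReal.ofReal (‖ψ u‖^2) := by
          apply ENNReal.ofReal_le_ofReal
          have : (0:ℝ) ≤ m/2 := by linarith
          nlinarith
      _ = (‖ψ u‖₊ : ENNReal) ^ 2 := by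
          rw [ENNReal.ofReal_pow (norm_nonneg _), ← coe_nnnorm, ENNReal.ofReal_coe_nnreal]
  -- measurability of the integrand
  have hmeas : Measurable (fun u : ℝ =>
      (‖ψ u‖₊ : ENNReal) ^ 2 / ENNReal.ofReal ((u - 1) ^ 2 * (u + 1) ^ 2)) := by
    apply Measurable.div
    · exact ((hc.measurable.nnnorm).coe_nnreal_ennreal).pow_const 2
    · exact (((measurable_id.sub_const 1).pow_const 2).mul
        ((measurable_id.add_const 1).pow_const 2)).ennreal_ofReal
  have htop : (⊤ : ENNReal) ≤ ∫⁻ u in Set.Ioc (-π) π,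
      (‖ψ u‖₊ : ENNReal) ^ 2 / ENNReal.ofReal ((u - 1) ^ 2 * (u + 1) ^ 2) := by
    calc (⊤ : ENNReal)
        = ENNReal.ofReal ((m/2)^2/16) * ∫⁻ u in Set.Ioo t0 (t0 + δ'),
            ENNReal.ofReal ((u - t0) ^ (-2:ℝ)) := by
          rw [lint_top' t0 hδ'pos, ENNReal.mul_top
            (by simp only [ne_eq, ENNReal.ofReal_eq_zero, not_le]; positivity)]
      _ = ∫⁻ u in Set.Ioo t0 (t0 + δ'),
            ENNReal.ofReal ((m/2)^2/16) * ENNReal.ofReal ((u - t0) ^ (-2:ℝ)) := by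
          have hme : Measurable fun u : ℝ => ENNReal.ofReal ((u - t0) ^ (-2:ℝ)) :=
            ((measurable_id.sub_const t0).pow_const _).ennreal_ofReal
          rw [lintegral_const_mul _ hme]
      _ ≤ ∫⁻ u in Set.Ioo t0 (t0 + δ'),
            (‖ψ u‖₊ : ENNReal) ^ 2 / ENNReal.ofReal ((u - 1) ^ 2 * (u + 1) ^ 2) :=
          setLIntegral_mono hmeas hlow
      _ ≤ _ := lintegral_mono' (Measure.restrict_mono hsub le_rfl) le_rfl
  exact hint (top_le_iff.1 htop)

lemma exp_ne : Complex.exp Complex.I ≠ Complex.exp (-Complex.I) := by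
  intro h
  have hs : Complex.sin 1 = 0 := by
    rw [Complex.sin]
    simp only [one_mul]
    rw [h]
    ring
  have : Real.sin 1 = 0 := by
    have := congrArg Complex.re hs
    have h' := Complex.sin_ofReal_re 1
    rw [Complex.ofReal_one] at h'
    rw [← h']; exact this
  have : 0 < Real.sin 1 := Real.sin_pos_of_pos_of_lt_pi one_pos (by linarith [Real.pi_gt_three])
  linarith [this]

/-- For `s(u) = (u-1)²(u+1)²` on `[-π,π]`, any not-identically-zero degree-`≤1`
trigonometric polynomial `ψ` with `∫_{-π}^{π} |ψ|²/s < ∞` factors as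
`e^{iu} ψ(u) = c (e^{iu} - e^{i})(e^{iu} - e^{-i})`; consequently `ψ` is even and `ψ'(0) = 0`.
Moreover `ψ(0) ≠ 0` is possible: there exists such a `ψ₀` with `ψ₀(0) ≠ 0`. -/
theorem stmt9 (s : ℝ → ℝ) (hs : ∀ u, s u = (u - 1) ^ 2 * (u + 1) ^ 2)
    (a : ℤ → ℂ) (ψ : ℝ → ℂ)
    (hψ : ∀ u : ℝ, ψ u = a (-1) * Complex.exp (-(Complex.I) * u) + a 0
        + a 1 * Complex.exp (Complex.I * u))
    (hne : ∃ u, ψ u ≠ 0)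
    (hint : ∫⁻ u in Set.Ioc (-π) π,
        (‖ψ u‖₊ : ENNReal) ^ 2 / ENNReal.ofReal (s u) ≠ ⊤) :
    (∃ c : ℂ, ∀ u : ℝ,
      Complex.exp (Complex.I * u) * ψ u =
        c * (Complex.exp (Complex.I * u) - Complex.exp Complex.I) *
          (Complex.exp (Complex.I * u) - Complex.exp (-Complex.I))) ∧
    (∀ u : ℝ, ψ u = ψ (-u)) ∧
    deriv ψ 0 = 0 ∧
    ∃ b : ℤ → ℂ, ∃ ψ₀ : ℝ → ℂ,
      (∀ u : ℝ, ψ₀ u = b (-1) * Complex.exp (-(Complex.I) * u) + b 0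
          + b 1 * Complex.exp (Complex.I * u)) ∧
      (∫⁻ u in Set.Ioc (-π) π,
        (‖ψ₀ u‖₊ : ENNReal) ^ 2 / ENNReal.ofReal (s u) ≠ ⊤) ∧
      ψ₀ 0 ≠ 0 := by
  simp only [hs] at hint
  have hcont : Continuous ψ := by
    have : ψ = fun u : ℝ => a (-1) * Complex.exp (-(Complex.I) * u) + a 0
        + a 1 * Complex.exp (Complex.I * u) := funext hψ
    rw [this]; fun_prop
  have h1 : ψ 1 = 0 := vanish ψ hcont 1 (Or.inl rfl) hint
  have h2 : ψ (-1) = 0 := vanish ψ hcont (-1) (Or.inr rfl) hint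
  set e := Complex.exp Complex.I with he
  set f := Complex.exp (-Complex.I) with hf
  have hef : e * f = 1 := by
    rw [he, hf, ← Complex.exp_add]; simp
  have h1' : a (-1) * f + a 0 + a 1 * e = 0 := by
    have h := h1; rw [hψ 1] at h
    rw [he, hf, ← h]
    push_cast
    ring_nf
  have h2' : a (-1) * e + a 0 + a 1 * f = 0 := by
    have h := h2; rw [hψ (-1)] at h
    rw [he, hf, ← h]
    push_cast
    ring_nf
  have hfe : f - e ≠ 0 := sub_ne_zero.2 (Ne.symm exp_ne)
  have ha : a (-1) = a 1 := by
    have h3 : (a (-1) - a 1) * (f - e) = 0 := by linear_combination h1' - h2'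
    rcases mul_eq_zero.1 h3 with h | h
    · exact sub_eq_zero.1 h
    · exact absurd h hfe
  have ha0 : a 0 = -(a 1) * e - a 1 * f := by linear_combination h1' - f * ha
  have key2 : ∀ x : ℝ, Complex.exp (Complex.I * x) + Complex.exp (-(Complex.I) * x)
      = 2 * (Real.cos x : ℂ) := by
    intro x
    rw [Complex.ofReal_cos, Complex.cos]
    ring_nf
  refine ⟨⟨a 1, fun u => ?_⟩, fun u => ?_, ?_, ?_⟩
  · -- factorization
    have hzw : Complex.exp (-(Complex.I) * u) * Complex.exp (Complex.I * u) = 1 := by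
      rw [← Complex.exp_add]; ring_nf; exact Complex.exp_zero
    rw [hψ u, ha, ha0]
    linear_combination a 1 * hzw - a 1 * hef
  · -- evenness
    rw [hψ u, hψ (-u), ha]
    push_cast
    rw [show -(Complex.I) * -(u:ℂ) = Complex.I * u by ring,
      show Complex.I * -(u:ℂ) = -(Complex.I) * u by ring]
    ring
  · -- derivative
    have hF : HasDerivAt (fun z : ℂ => a 1 * Complex.exp (-(Complex.I) * z) + a 0
        + a 1 * Complex.exp (Complex.I * z))
        (a 1 * (Complex.exp (-(Complex.I) * (0:ℂ)) * -(Complex.I))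
          + a 1 * (Complex.exp (Complex.I * (0:ℂ)) * Complex.I)) 0 := by
      have d1 : HasDerivAt (fun z : ℂ => Complex.exp (-(Complex.I) * z))
          (Complex.exp (-(Complex.I) * (0:ℂ)) * -(Complex.I)) 0 := by
        simpa using (((hasDerivAt_id (0:ℂ)).const_mul (-(Complex.I))).cexp)
      have d2 : HasDerivAt (fun z : ℂ => Complex.exp (Complex.I * z))
          (Complex.exp (Complex.I * (0:ℂ)) * Complex.I) 0 := by
        simpa using (((hasDerivAt_id (0:ℂ)).const_mul Complex.I).cexp)
      exact ((d1.const_mul (a 1)).add_const (a 0)).add (d2.const_mul (a 1))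
    have hψ' : HasDerivAt ψ 0 0 := by
      have h0 := hF.comp_ofReal (z := 0)
      have hval : a 1 * (Complex.exp (-(Complex.I) * (0:ℂ)) * -(Complex.I))
          + a 1 * (Complex.exp (Complex.I * (0:ℂ)) * Complex.I) = 0 := by
        simp
      rw [hval] at h0
      apply h0.congr_of_eventuallyEq
      filter_upwards with u
      rw [hψ u, ha]
    exact hψ'.deriv
  · -- the example
    refine ⟨fun n => if n = 0 then -(e + f) else 1,
      fun u => ((2 * Real.cos u - 2 * Real.cos 1 : ℝ) : ℂ), fun u => ?_, ?_, ?_⟩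
    · beta_reduce
      rw [if_neg (by decide : ¬(-1:ℤ) = 0), if_pos rfl, if_neg (by decide : ¬(1:ℤ) = 0)]
      have hcu := key2 u
      have hc1 := key2 1
      rw [Complex.ofReal_one, mul_one, mul_one, ← he, ← hf] at hc1
      rw [Complex.ofReal_sub, Complex.ofReal_mul, Complex.ofReal_mul, Complex.ofReal_ofNat]
      linear_combination hc1 - hcu
    · -- finiteness of the integral for ψ₀
      simp only [hs]
      have hb : ∀ u : ℝ, ((‖((2 * Real.cos u - 2 * Real.cos 1 : ℝ) : ℂ)‖₊ : ENNReal)) ^ 2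
          / ENNReal.ofReal ((u - 1) ^ 2 * (u + 1) ^ 2) ≤ 1 := by
        intro u
        have key : (2 * Real.cos u - 2 * Real.cos 1) ^ 2 ≤ (u - 1) ^ 2 * (u + 1) ^ 2 := by
          have hc : Real.cos u - Real.cos 1
              = -2 * Real.sin ((u + 1)/2) * Real.sin ((u - 1)/2) := Real.cos_sub_cos u 1
          have h1 : |Real.sin ((u + 1)/2)| ≤ |(u + 1)/2| := Real.abs_sin_le_abs
          have h2 : |Real.sin ((u - 1)/2)| ≤ |(u - 1)/2| := Real.abs_sin_le_abs
          have habs : |2 * Real.cos u - 2 * Real.cos 1| ≤ |u + 1| * |u - 1| := by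
            have heq : |2 * Real.cos u - 2 * Real.cos 1|
                = 4 * (|Real.sin ((u + 1)/2)| * |Real.sin ((u - 1)/2)|) := by
              rw [show 2 * Real.cos u - 2 * Real.cos 1 = 2 * (Real.cos u - Real.cos 1) by ring, hc]
              rw [show 2 * (-2 * Real.sin ((u+1)/2) * Real.sin ((u-1)/2))
                  = -(4 * (Real.sin ((u+1)/2) * Real.sin ((u-1)/2))) by ring]
              rw [abs_neg, abs_mul, abs_mul]
              norm_num
            rw [heq]
            have h3 : |Real.sin ((u + 1)/2)| * |Real.sin ((u - 1)/2)| ≤ |(u+1)/2| * |(u-1)/2| :=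
              mul_le_mul h1 h2 (abs_nonneg _) (abs_nonneg _)
            have h4 : |(u+1)/2| * |(u-1)/2| = |u + 1| * |u - 1| / 4 := by
              rw [abs_div, abs_div]
              norm_num
              ring
            rw [h4] at h3
            linarith
          calc (2 * Real.cos u - 2 * Real.cos 1) ^ 2
              = |2 * Real.cos u - 2 * Real.cos 1| ^ 2 := (_root_.sq_abs _).symm
            _ ≤ (|u + 1| * |u - 1|) ^ 2 := by
                apply pow_le_pow_left₀ (abs_nonneg _) habs _
            _ = (u - 1) ^ 2 * (u + 1) ^ 2 := by
                rw [mul_pow, _root_.sq_abs, _root_.sq_abs]; ring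
        apply ENNReal.div_le_of_le_mul
        rw [one_mul, ← ENNReal.ofReal_coe_nnreal, coe_nnnorm, ← ENNReal.ofReal_pow (norm_nonneg _)]
        apply ENNReal.ofReal_le_ofReal
        rw [Complex.norm_real, Real.norm_eq_abs, _root_.sq_abs]
        exact key
      have hle : (∫⁻ u in Set.Ioc (-π) π,
          ((‖((2 * Real.cos u - 2 * Real.cos 1 : ℝ) : ℂ)‖₊ : ENNReal)) ^ 2
            / ENNReal.ofReal ((u - 1) ^ 2 * (u + 1) ^ 2))
          ≤ volume (Set.Ioc (-π:ℝ) π) := by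
        rw [← setLIntegral_one]
        exact lintegral_mono fun u => hb u
      have hfin : volume (Set.Ioc (-π:ℝ) π) ≠ ⊤ := by
        rw [Real.volume_Ioc]
        exact ENNReal.ofReal_ne_top
      exact ne_top_of_le_ne_top hfin hle
    · -- nonvanishing at 0
      intro hcon
      rw [Complex.ofReal_eq_zero] at hcon
      have hlt : Real.cos 1 < 1 := by
        have h := Real.cos_lt_cos_of_nonneg_of_le_pi (le_refl 0) (by linarith [Real.pi_gt_three])
          one_pos
        simpa using h
      rw [Real.cos_zero] at hcon
      linarith
end

section
/- Let s : ℝ² → ℝ≥0 be measurable and suppose s(u) = u₂² for all u in some neighborhood B((1,0), ε) of the point (1,0). Then every analytic (entire on ℂ², restricted to ℝ²) function ψ with ∫_{ℝ²} |ψ(u)|²/s(u) du < ∞ satisfies ψ(1+u₁, 0) = 0 for all |u₁| ≤ ε, and hence ψ(0) = 0. Indeed, for each fixed u₁ with |u₁| ≤ ε, ∫_{B((1+u₁,0),δ)} s(u)^{-1} du ≥ ∫∫ u₂^{-2} du₁ du₂ = ∞ for small δ, forcing ψ to vanish on the segment; the identity theorem then gives ψ(·, 0) ≡ 0. -/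
open MeasureTheory Metric

lemma aux_inv_sq (δ : ℝ) (hδ : 0 < δ) :
    ∫⁻ y in Set.Ioo (0:ℝ) δ, ENNReal.ofReal ((y ^ 2)⁻¹) = ⊤ := by
  by_contra h
  have hmeas : Measurable fun y : ℝ => (y ^ 2)⁻¹ := (measurable_id.pow_const 2).inv
  have hInt : IntegrableOn (fun y : ℝ => (y ^ 2)⁻¹) (Set.Ioo 0 δ) := by
    refine ⟨hmeas.aestronglyMeasurable, ?_⟩
    rw [hasFiniteIntegral_iff_ofReal]
    · exact lt_top_iff_ne_top.2 h
    · filter_upwards with y using inv_nonneg.2 (sq_nonneg y)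
  have h2 : IntegrableOn (fun y : ℝ => y ^ (-2 : ℝ)) (Set.Ioo 0 δ) := by
    refine hInt.congr_fun (fun y hy => ?_) measurableSet_Ioo
    rw [Real.rpow_neg hy.1.le, show ((2:ℝ)) = ((2:ℕ):ℝ) by norm_num, Real.rpow_natCast]
  rw [intervalIntegral.integrableOn_Ioo_rpow_iff hδ] at h2
  linarith

/-- if `s : ℝ² → ℝ≥0` equals `u₂²` on a neighborhood of `(1,0)` and `ψ` is an
entire function on `ℂ²` with `∫_{ℝ²} |ψ|²/s < ∞` (convention `1/0 = ∞`), then `ψ` vanishes on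
the real segment `{(1+u₁, 0) : |u₁| ≤ ε}` and hence, by the identity theorem, `ψ(0,0) = 0`. -/
theorem stmt19 (s : ℝ × ℝ → ℝ) (hs0 : ∀ u, 0 ≤ s u)
    (ε : ℝ) (hε : 0 < ε)
    (hs : ∀ u ∈ ball ((1 : ℝ), (0 : ℝ)) ε, s u = u.2 ^ 2)
    (ψ : ℂ × ℂ → ℂ) (hψ : ∀ z : ℂ × ℂ, AnalyticAt ℂ ψ z)
    (hint : ∫⁻ u : ℝ × ℝ,
        (‖ψ ((u.1 : ℂ), (u.2 : ℂ))‖₊ : ENNReal) ^ 2 / ENNReal.ofReal (s u) ≠ ⊤) :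
    (∀ u₁ : ℝ, |u₁| ≤ ε → ψ (((1 + u₁ : ℝ) : ℂ), 0) = 0) ∧ ψ (0, 0) = 0 := by
  -- Step 1: ψ vanishes at real points (x,0) with |x-1| < ε
  have key : ∀ x : ℝ, |x - 1| < ε → ψ ((x : ℂ), 0) = 0 := by
    intro x hx
    by_contra hne
    set c := ‖ψ ((x:ℂ), 0)‖ with hcdef
    have hc0 : 0 < c := norm_pos_iff.2 hne
    have hFc : ContinuousAt (fun u : ℝ × ℝ => ψ ((u.1 : ℂ), (u.2 : ℂ))) (x, 0) := by
      have hinner : ContinuousAt (fun u : ℝ × ℝ => (((u.1 : ℂ), (u.2 : ℂ)) : ℂ × ℂ)) (x, 0) := by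
        fun_prop
      exact ContinuousAt.comp (f := fun u : ℝ × ℝ => (((u.1 : ℂ), (u.2 : ℂ)) : ℂ × ℂ))
        (hψ (((x:ℝ):ℂ), ((0:ℝ):ℂ))).continuousAt hinner
    have hval : c/2 < ‖(fun u : ℝ × ℝ => ψ ((u.1 : ℂ), (u.2 : ℂ))) (x, 0)‖ := by
      simp only [Complex.ofReal_zero]
      exact half_lt_self hc0
    have h1 : ∀ᶠ u in nhds ((x:ℝ), (0:ℝ)), c/2 < ‖ψ ((u.1:ℂ), (u.2:ℂ))‖ :=
      hFc.norm.eventually (eventually_gt_nhds hval)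
    have hmem : ((x:ℝ), (0:ℝ)) ∈ ball ((1:ℝ), (0:ℝ)) ε := by
      rw [mem_ball, Prod.dist_eq]
      refine max_lt ?_ ?_
      · rwa [Real.dist_eq]
      · simpa using hε
    have h2 : ∀ᶠ u in nhds ((x:ℝ), (0:ℝ)), u ∈ ball ((1:ℝ), (0:ℝ)) ε :=
      isOpen_ball.eventually_mem hmem
    obtain ⟨δ, hδ0, hball⟩ := Metric.eventually_nhds_iff.1 (h1.and h2)
    set A := Set.Ioo (x - δ/2) (x + δ/2) with hA
    set B := Set.Ioo (0:ℝ) (δ/2) with hB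
    have hsub : ∀ u : ℝ × ℝ, u ∈ A ×ˢ B → dist u ((x:ℝ), (0:ℝ)) < δ := by
      rintro ⟨u1, u2⟩ ⟨h1', h2'⟩
      simp only [hA, hB, Set.mem_Ioo] at h1' h2'
      rw [Prod.dist_eq]
      refine max_lt ?_ ?_
      · rw [Real.dist_eq, abs_lt]; constructor <;> linarith [h1'.1, h1'.2]
      · rw [Real.dist_eq, sub_zero, abs_of_pos h2'.1]; linarith [h2'.2]
    have hlow : ∀ u : ℝ × ℝ,
        (A ×ˢ B).indicator
          (fun u => ENNReal.ofReal ((c/2)^2) * ENNReal.ofReal ((u.2^2)⁻¹)) u ≤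
        (‖ψ ((u.1 : ℂ), (u.2 : ℂ))‖₊ : ENNReal) ^ 2 / ENNReal.ofReal (s u) := by
      intro u
      by_cases hu : u ∈ A ×ˢ B
      · rw [Set.indicator_of_mem hu]
        obtain ⟨hn, hb⟩ := hball (hsub u hu)
        have hu2 : (0:ℝ) < u.2 := hu.2.1
        rw [hs u hb, ENNReal.ofReal_inv_of_pos (by positivity : (0:ℝ) < u.2 ^ 2)]
        refine ENNReal.div_le_div ?_ le_rfl
        have hq : ((‖ψ ((u.1:ℂ), (u.2:ℂ))‖₊ : ENNReal)) ^ 2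
            = ENNReal.ofReal (‖ψ ((u.1:ℂ), (u.2:ℂ))‖ ^ 2) := by
          rw [ENNReal.ofReal_pow (norm_nonneg _), ofReal_norm, enorm_eq_nnnorm]
        rw [hq]
        refine ENNReal.ofReal_le_ofReal ?_
        nlinarith [norm_nonneg (ψ ((u.1:ℂ), (u.2:ℂ)))]
      · rw [Set.indicator_of_notMem hu]; exact zero_le
    have hle := lintegral_mono (μ := volume) hlow
    have hAB : MeasurableSet (A ×ˢ B) := measurableSet_Ioo.prod measurableSet_Ioo
    rw [lintegral_indicator hAB] at hle
    have hinner : (∫⁻ y in B, ENNReal.ofReal ((c/2)^2) * ENNReal.ofReal ((y^2)⁻¹)) = ⊤ := by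
      have hm0 : Measurable fun y : ℝ => (y ^ 2)⁻¹ := (measurable_id.pow_const 2).inv
      rw [lintegral_const_mul _ hm0.ennreal_ofReal, hB, aux_inv_sq _ (by linarith)]
      rw [ENNReal.mul_top]
      exact (ENNReal.ofReal_pos.2 (by positivity)).ne'
    have hcalc : ∫⁻ u in A ×ˢ B,
        ENNReal.ofReal ((c/2)^2) * ENNReal.ofReal ((u.2^2)⁻¹) = ⊤ := by
      have hmeas' : Measurable fun u : ℝ × ℝ =>
          ENNReal.ofReal ((c/2)^2) * ENNReal.ofReal ((u.2^2)⁻¹) :=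
        measurable_const.mul (Measurable.ennreal_ofReal ((measurable_snd.pow_const 2).inv))
      rw [Measure.volume_eq_prod, ← Measure.prod_restrict, lintegral_prod _ hmeas'.aemeasurable]
      simp only [hinner]
      rw [setLIntegral_const]
      rw [ENNReal.top_mul]
      simp only [hA, Real.volume_Ioo]
      simp only [ne_eq, ENNReal.ofReal_eq_zero, not_le]
      linarith
    rw [hcalc] at hle
    exact hint (top_le_iff.1 hle)
  -- Step 2: identity theorem for g z = ψ (z, 0)
  have hg : ∀ z : ℂ, AnalyticAt ℂ (fun z : ℂ => ψ (z, 0)) z := by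
    intro z
    have hinner : AnalyticAt ℂ (fun z : ℂ => ((z, (0:ℂ)) : ℂ × ℂ)) z :=
      analyticAt_id.prod analyticAt_const
    exact AnalyticAt.comp (g := ψ) (f := fun z : ℂ => ((z, (0:ℂ)) : ℂ × ℂ)) (hψ (z, 0)) hinner
  have h0 : Filter.Tendsto (fun n : ℕ => (1 + ε/(n+2) : ℝ)) Filter.atTop (nhds 1) := by
    have hq := Filter.Tendsto.div_atTop (tendsto_const_nhds (x := ε) (f := Filter.atTop (α := ℕ)))
      (Filter.tendsto_atTop_add_const_right _ 2 tendsto_natCast_atTop_atTop)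
    simpa using (tendsto_const_nhds (x := (1:ℝ))).add hq
  have htend : Filter.Tendsto (fun n : ℕ => ((1 + ε/(n+2) : ℝ) : ℂ)) Filter.atTop
      (nhdsWithin 1 {(1:ℂ)}ᶜ) := by
    apply tendsto_nhdsWithin_of_tendsto_nhds_of_eventually_within
    · have hcomp := ((Complex.continuous_ofReal.tendsto 1).comp h0 :
        Filter.Tendsto ((fun r : ℝ => (r : ℂ)) ∘ fun n : ℕ => (1 + ε/(n+2) : ℝ))
          Filter.atTop (nhds ((1:ℝ):ℂ)))
      rw [show ((1:ℝ):ℂ) = (1:ℂ) from Complex.ofReal_one] at hcomp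
      exact hcomp
    · filter_upwards with n
      simp only [Set.mem_compl_iff, Set.mem_singleton_iff]
      intro hcontra
      have h1 : (1 + ε/(n+2) : ℝ) = 1 := by exact_mod_cast hcontra
      have hpos : 0 < ε/((n:ℝ)+2) := by positivity
      linarith
  have hfreq : ∃ᶠ z in nhdsWithin (1:ℂ) {(1:ℂ)}ᶜ, (fun z : ℂ => ψ (z, 0)) z = 0 := by
    refine htend.frequently (Filter.Frequently.of_forall fun n => ?_)
    apply key
    have hn : (0:ℝ) ≤ (n:ℝ) := Nat.cast_nonneg n
    rw [add_sub_cancel_left, abs_of_pos (by positivity)]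
    rw [div_lt_iff₀ (by linarith)]
    nlinarith
  have hzero : Set.EqOn (fun z : ℂ => ψ (z, 0)) 0 Set.univ :=
    AnalyticOnNhd.eqOn_zero_of_preconnected_of_frequently_eq_zero
      (fun z _ => hg z) isPreconnected_univ (Set.mem_univ (1:ℂ)) hfreq
  exact ⟨fun u₁ _ => hzero (Set.mem_univ _), hzero (Set.mem_univ _)⟩
end
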